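/- arXiv:1410.2819 — 2 statements merged into one kernel-verified Lean document; each statement's English description precedes it below -/
import Mathlib

section
/- For every s > 0, the function t ↦ exp((log t − log s)²) is convex on the interval (0, ∞). (Hence in the one-dimensional setting the additive logarithmic framework preserves convexity of the exponentiated Hencky energy.) -/
/-!
Substituting `t = exp u`, a function `F ∘ log` is convex on `(0, ∞)` as soon as `F' ≤ F''`, since
`(F ∘ log)''(t) = (F''(log t) - F'(log t)) / t²`. For `F u = exp ((u - c)²)` one has
`F'' - F' = (4 (u - c)² - 2 (u - c) + 2) F`, and this quadratic in `u - c` has negative discriminant.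
-/

open Real Set

theorem convexOn_Ioi_comp_log {F F' F'' : ℝ → ℝ} (hF : ∀ u, HasDerivAt F (F' u) u)
    (hF' : ∀ u, HasDerivAt F' (F'' u) u) (hle : ∀ u, F' u ≤ F'' u) :
    ConvexOn ℝ (Ioi 0) (fun t => F (log t)) := by
  have hderiv : ∀ t : ℝ, 0 < t → HasDerivAt (fun t => F (log t)) (F' (log t) / t) t :=
    fun t ht => ((hF (log t)).comp t (hasDerivAt_log ht.ne')).congr_deriv (div_eq_mul_inv _ _).symm
  have hderiv2 : ∀ t : ℝ, 0 < t →
      HasDerivAt (fun t => F' (log t) / t) ((F'' (log t) - F' (log t)) / t ^ 2) t := by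
    intro t ht
    refine (((hF' (log t)).comp t (hasDerivAt_log ht.ne')).fun_div (hasDerivAt_id' t)
      ht.ne').congr_deriv ?_
    field_simp
    simp
  refine convexOn_of_hasDerivWithinAt2_nonneg (f' := fun t => F' (log t) / t)
    (f'' := fun t => (F'' (log t) - F' (log t)) / t ^ 2) (convex_Ioi 0)
    (fun t ht => (hderiv t ht).continuousAt.continuousWithinAt) ?_ ?_ ?_ <;>
    rw [interior_Ioi]
  · exact fun t ht => (hderiv t ht).hasDerivWithinAt
  · exact fun t ht => (hderiv2 t ht).hasDerivWithinAt
  · exact fun t _ => div_nonneg (sub_nonneg.mpr (hle _)) (sq_nonneg t)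

theorem hasDerivAt_exp_sub_sq (c u : ℝ) :
    HasDerivAt (fun u => exp ((u - c) ^ 2)) (2 * (u - c) * exp ((u - c) ^ 2)) u :=
  (((hasDerivAt_id' u).sub_const c).fun_pow 2).exp.congr_deriv (by ring)

theorem hasDerivAt_mul_exp_sub_sq (c u : ℝ) :
    HasDerivAt (fun u => 2 * (u - c) * exp ((u - c) ^ 2))
      ((2 + 4 * (u - c) ^ 2) * exp ((u - c) ^ 2)) u :=
  ((((hasDerivAt_id' u).sub_const c).const_mul 2).mul (hasDerivAt_exp_sub_sq c u)).congr_deriv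
    (by ring)

theorem stmt6_general (s : ℝ) :
    ConvexOn ℝ (Set.Ioi (0 : ℝ)) (fun t => Real.exp ((Real.log t - Real.log s) ^ 2)) := by
  refine convexOn_Ioi_comp_log (hasDerivAt_exp_sub_sq (log s))
    (hasDerivAt_mul_exp_sub_sq (log s)) fun u => ?_
  have hquad : 2 * (u - log s) ≤ 2 + 4 * (u - log s) ^ 2 := by
    nlinarith [sq_nonneg (4 * (u - log s) - 1)]
  exact mul_le_mul_of_nonneg_right hquad (exp_pos _).le

theorem stmt6 (s : ℝ) (hs : 0 < s) :
    ConvexOn ℝ (Set.Ioi (0 : ℝ)) (fun t => Real.exp ((Real.log t - Real.log s) ^ 2)) :=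
  stmt6_general s
end

section
/- For every t ∈ ℝ, let λ₁(t) := (√(t²+4)+t)/2 and L(t) := (log λ₁(t)/√(t²+4))·[[−t, 2],[2, t]]. Then the matrix exponential of L(t) equals U(t) := (1/√(t²+4))·[[2, t],[t, t²+2]]; that is, L(t) is the principal matrix logarithm of the right stretch tensor U(t) of simple shear: L(t) = log U(t). -/
/-!
`L(t) = log λ₁(t) • J(t)` with `J(t) = (1/√(t²+4)) • [[−t, 2], [2, t]]` an involution, and for an
involution the exponential series splits into even and odd parts:
`exp (c • J) = cosh c • 1 + sinh c • J`. Since `λ₁(t)⁻¹ = (√(t²+4) − t)/2`, we get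
`cosh (log λ₁) = √(t²+4)/2` and `sinh (log λ₁) = t/2`, and the resulting combination is `U(t)`.
-/

open Matrix

/-- The right stretch tensor `U(t) = (1/√(t²+4)) • [[2, t], [t, t²+2]]` of simple shear. -/
noncomputable def Ush (t : ℝ) : Matrix (Fin 2) (Fin 2) ℝ :=
  (1 / Real.sqrt (t ^ 2 + 4)) • !![2, t; t, t ^ 2 + 2]

/-- The larger eigenvalue `λ₁(t) = (√(t²+4)+t)/2` of `U(t)`. -/
noncomputable def lam1 (t : ℝ) : ℝ := (Real.sqrt (t ^ 2 + 4) + t) / 2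

/-- The principal matrix logarithm `L(t) = (log λ₁(t)/√(t²+4)) • [[−t, 2], [2, t]]`
of the right stretch tensor of simple shear. -/
noncomputable def Lsh (t : ℝ) : Matrix (Fin 2) (Fin 2) ℝ :=
  (Real.log (lam1 t) / Real.sqrt (t ^ 2 + 4)) • !![-t, 2; 2, t]

open NormedSpace

theorem exp_smul_of_mul_self_eq_one {A : Type*} [Ring A] [Algebra ℝ A] [TopologicalSpace A]
    [IsTopologicalRing A] [ContinuousSMul ℝ A] [T2Space A] {J : A} (hJ : J * J = 1) (c : ℝ) :
    exp (c • J) = Real.cosh c • (1 : A) + Real.sinh c • J := by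
  have hpow_even (n : ℕ) : J ^ (2 * n) = 1 := by rw [pow_mul, sq, hJ, one_pow]
  rw [exp_eq_tsum ℝ]
  refine HasSum.tsum_eq (HasSum.even_add_odd ?_ ?_)
  · convert (Real.hasSum_cosh c).smul_const (1 : A) using 2 with n
    rw [smul_pow, hpow_even, smul_smul, div_eq_inv_mul]
  · convert (Real.hasSum_sinh c).smul_const J using 2 with n
    rw [smul_pow, pow_succ J, hpow_even, one_mul, smul_smul, div_eq_inv_mul]

lemma lam1_pos (t : ℝ) : 0 < lam1 t := by
  have : |t| < √(t ^ 2 + 4) := by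
    rw [← Real.sqrt_sq_eq_abs]; exact Real.sqrt_lt_sqrt (sq_nonneg t) (by linarith)
  unfold lam1; linarith [neg_abs_le t]

lemma lam1_inv (t : ℝ) : (lam1 t)⁻¹ = (√(t ^ 2 + 4) - t) / 2 := by
  have hs : √(t ^ 2 + 4) ^ 2 = t ^ 2 + 4 := Real.sq_sqrt (by positivity)
  rw [inv_eq_of_mul_eq_one_right]
  unfold lam1; linear_combination hs / 4

lemma cosh_log_lam1 (t : ℝ) : Real.cosh (Real.log (lam1 t)) = √(t ^ 2 + 4) / 2 := by
  rw [Real.cosh_log (lam1_pos t), lam1_inv, lam1]; ring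

lemma sinh_log_lam1 (t : ℝ) : Real.sinh (Real.log (lam1 t)) = t / 2 := by
  rw [Real.sinh_log (lam1_pos t), lam1_inv, lam1]; ring

noncomputable def shearInvolution (t : ℝ) : Matrix (Fin 2) (Fin 2) ℝ :=
  (1 / √(t ^ 2 + 4)) • !![-t, 2; 2, t]

lemma shearInvolution_mul_self (t : ℝ) : shearInvolution t * shearInvolution t = 1 := by
  have hsq : !![-t, 2; 2, t] * !![-t, 2; 2, t] =
      √(t ^ 2 + 4) ^ 2 • (1 : Matrix (Fin 2) (Fin 2) ℝ) := by
    rw [Real.sq_sqrt (by positivity), Matrix.mul_fin_two, Matrix.one_fin_two, Matrix.smul_of]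
    congr 1; ext i j; fin_cases i <;> fin_cases j <;> simp <;> ring
  have hs0 : √(t ^ 2 + 4) ≠ 0 := by positivity
  rw [shearInvolution, smul_mul_smul, hsq, smul_smul,
    show 1 / √(t ^ 2 + 4) * (1 / √(t ^ 2 + 4)) * √(t ^ 2 + 4) ^ 2 = 1 by field_simp, one_smul]

lemma Lsh_eq_smul (t : ℝ) : Lsh t = Real.log (lam1 t) • shearInvolution t := by
  rw [Lsh, shearInvolution, smul_smul, div_eq_mul_one_div]

theorem stmt11 (t : ℝ) : NormedSpace.exp (Lsh t) = Ush t := by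
  have hs : √(t ^ 2 + 4) ^ 2 = t ^ 2 + 4 := Real.sq_sqrt (by positivity)
  have hs0 : √(t ^ 2 + 4) ≠ 0 := by positivity
  rw [Lsh_eq_smul, exp_smul_of_mul_self_eq_one (shearInvolution_mul_self t), cosh_log_lam1,
    sinh_log_lam1, shearInvolution, Ush, Matrix.one_fin_two]
  ext i j; fin_cases i <;> fin_cases j <;> simp <;> field_simp <;> linear_combination hs
end
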